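/- Let (x_n) ⊂ [0,1], 0 ≤ β < 1, and suppose there exists s₀ > 0 such that f_β(s) := lim_{N→∞} F_{N,β}(s) exists for all s < s₀, with f_β(0) = 0 and f_β differentiable on [0, s₀). Then for every s ≥ 0, limsup_{N→∞} F_{N,β}(s) ≤ f_β'(0)·s. -/

import Mathlib

open MeasureTheory Filter
open scoped Classical

/-- Distance to the nearest integer. -/
noncomputable def nearestIntDist (x : ℝ) : ℝ := |x - round x|

/-- The weak pair correlation statistic `F_{N,β}(s)`. -/
noncomputable def pairCorr (x : ℕ → ℝ) (β : ℝ) (N : ℕ) (s : ℝ) : ℝ :=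
  (N : ℝ) ^ (β - 2) *
    (((Finset.range N ×ˢ Finset.range N).filter
      (fun p => p.1 ≠ p.2 ∧ nearestIntDist (x p.1 - x p.2) ≤ s / (N : ℝ) ^ β)).card)

/-!
Write `‖·‖` for the distance to the nearest integer, `σ = s / (K N^β)` and
`tent σ z = max (σ - ‖z‖) 0`. A pair with `‖x_i - x_j‖ ≤ Kσ` lies under the tents centred at
`2K + 2` consecutive multiples of `σ`. The tent is positive definite on `ℝ/ℤ`, being the
autocorrelation of the indicator of an arc (checked exactly on `ℤ/Qℤ`, then `Q → ∞`), so
translating every difference by `rσ` does not increase `∑_{i,j} tent σ (x_i - x_j)`. A layer-cake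
decomposition bounds this sum by an average of pair counts at the radii `mσ/K`. After
normalisation,
`F_N(s) ≤ (2K + 2) ((1/K) ∑_{m ≤ K} F_N(m s / K²) + N^{β-1})`,
so with `f u ≤ (f'(0) + γ) u` near `0` we get `limsup F_N(s) ≤ (f'(0) + γ) s (1 + 1/K)²`;
then `K → ∞` and `γ → 0`.
-/

open Finset Topology

lemma nearestIntDist_eq_norm (z : ℝ) : nearestIntDist z = ‖(z : UnitAddCircle)‖ :=
  UnitAddCircle.norm_eq.symm

lemma nearestIntDist_nonneg (z : ℝ) : 0 ≤ nearestIntDist z := abs_nonneg _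

lemma nearestIntDist_add_intCast (z : ℝ) (n : ℤ) : nearestIntDist (z + n) = nearestIntDist z := by
  simp only [nearestIntDist, round_add_intCast, Int.cast_add]
  ring_nf

lemma nearestIntDist_le_abs_sub_intCast (z : ℝ) (n : ℤ) : nearestIntDist z ≤ |z - n| :=
  round_le z n

lemma nearestIntDist_le_abs (z : ℝ) : nearestIntDist z ≤ |z| := by
  simpa using nearestIntDist_le_abs_sub_intCast z 0

lemma abs_nearestIntDist_sub_le (u v : ℝ) : |nearestIntDist u - nearestIntDist v| ≤ |u - v| := by
  calc |nearestIntDist u - nearestIntDist v|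
      ≤ ‖(u : UnitAddCircle) - v‖ := by
        simpa only [nearestIntDist_eq_norm] using abs_norm_sub_norm_le _ _
    _ = nearestIntDist (u - v) := by rw [nearestIntDist_eq_norm, AddCircle.coe_sub]
    _ ≤ |u - v| := nearestIntDist_le_abs _

lemma nearestIntDist_intCast_div (Q : ℕ) [NeZero Q] (k : ℤ) :
    nearestIntDist (k / Q) = min (k : ZMod Q).val (Q - (k : ZMod Q).val) / Q := by
  have hQ : (Q : ℝ) ≠ 0 := Nat.cast_ne_zero.mpr (NeZero.ne Q)
  have hk : (k : ℝ) / Q = (k : ZMod Q).val / Q + (k / Q : ℤ) := by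
    rw [div_add' _ _ _ hQ, div_left_inj' hQ]
    have : k = (k : ZMod Q).val + k / Q * Q := by
      rw [ZMod.val_intCast]; exact (Int.emod_add_ediv_mul k Q).symm
    exact_mod_cast this
  have : Fact ((0 : ℝ) < 1) := ⟨one_pos⟩
  rw [hk, nearestIntDist_add_intCast, nearestIntDist_eq_norm, ← mul_one ((_ : ℝ) / Q),
    AddCircle.norm_div_natCast, Nat.mod_eq_of_lt (ZMod.val_lt _), one_mul]

noncomputable def tent (σ z : ℝ) : ℝ := max (σ - nearestIntDist z) 0

lemma tent_nonneg (σ z : ℝ) : 0 ≤ tent σ z := le_max_right _ _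

lemma tent_le {σ : ℝ} (hσ : 0 ≤ σ) (z : ℝ) : tent σ z ≤ σ :=
  max_le (by linarith [nearestIntDist_nonneg z]) hσ

lemma sub_abs_sub_intCast_le_tent (σ z : ℝ) (n : ℤ) : σ - |z - n| ≤ tent σ z :=
  (sub_le_sub_left (nearestIntDist_le_abs_sub_intCast z n) σ).trans (le_max_left _ _)

lemma abs_tent_sub_tent_le (σ τ u v : ℝ) : |tent σ u - tent τ v| ≤ |σ - τ| + |u - v| :=
  calc |tent σ u - tent τ v|
      ≤ |(σ - nearestIntDist u) - (τ - nearestIntDist v)| := abs_max_sub_max_le_abs _ _ _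
    _ = |(σ - τ) - (nearestIntDist u - nearestIntDist v)| := by ring_nf
    _ ≤ |σ - τ| + |nearestIntDist u - nearestIntDist v| := abs_sub _ _
    _ ≤ |σ - τ| + |u - v| := add_le_add le_rfl (abs_nearestIntDist_sub_le u v)

/-- The two multiples `rσ ≤ w < (r + 1)σ` around `w = z - round z` already contribute `σ`. -/
lemma le_sum_tent_sub_mul {σ : ℝ} (hσ : 0 < σ) {K : ℕ} {z : ℝ} (hz : nearestIntDist z ≤ K * σ) :
    σ ≤ ∑ n ∈ Icc (-(K : ℤ)) (K + 1), tent σ (z - n * σ) := by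
  set w := z - round z
  have hw : |w| ≤ K * σ := hz
  set r := ⌊w / σ⌋
  have hr : r * σ ≤ w := (le_div_iff₀ hσ).mp (Int.floor_le _)
  have hr' : w < (r + 1) * σ := (div_lt_iff₀ hσ).mp (Int.lt_floor_add_one _)
  have hrK : -(K : ℤ) ≤ r ∧ r ≤ K := by
    have := abs_le.mp hw
    constructor
    · exact Int.le_floor.mpr ((le_div_iff₀ hσ).mpr (by push_cast; linarith))
    · exact Int.floor_le_iff.mpr ((div_lt_iff₀ hσ).mpr (by push_cast; linarith))
  have key (n : ℤ) : σ - |w - n * σ| ≤ tent σ (z - n * σ) := by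
    simpa only [w, sub_right_comm] using sub_abs_sub_intCast_le_tent σ (z - n * σ) (round z)
  have hsub : ({r, r + 1} : Finset ℤ) ⊆ Icc (-(K : ℤ)) (K + 1) := by
    intro n
    simp only [mem_insert, mem_singleton, mem_Icc]
    omega
  calc σ = (σ - |w - r * σ|) + (σ - |w - (r + 1 : ℤ) * σ|) := by
        rw [abs_of_nonneg (by linarith), abs_of_neg (by push_cast; linarith)]; push_cast; ring
    _ ≤ tent σ (z - r * σ) + tent σ (z - (r + 1 : ℤ) * σ) := add_le_add (key r) (key (r + 1))
    _ = ∑ n ∈ {r, r + 1}, tent σ (z - n * σ) := by rw [sum_pair (show r ≠ r + 1 by omega)]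
    _ ≤ ∑ n ∈ Icc (-(K : ℤ)) (K + 1), tent σ (z - n * σ) :=
        sum_le_sum_of_subset_of_nonneg hsub fun _ _ _ => tent_nonneg _ _

lemma card_filter_Icc_lt_le (M : ℕ) {y : ℝ} (hy : 0 ≤ y) :
    (#((Icc 1 M).filter fun m : ℕ => (m : ℝ) < y) : ℝ) ≤ y := by
  have hsub : (Icc 1 M).filter (fun m : ℕ => (m : ℝ) < y) ⊆ Ico 1 ⌈y⌉₊ := fun m hm => by
    simp only [mem_filter, mem_Icc, mem_Ico] at hm ⊢
    exact ⟨hm.1.1, Nat.lt_ceil.mpr hm.2⟩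
  calc (#((Icc 1 M).filter fun m : ℕ => (m : ℝ) < y) : ℝ) ≤ #(Ico 1 ⌈y⌉₊) := by
        exact_mod_cast card_le_card hsub
    _ ≤ y := by
      rw [Nat.card_Ico]
      rcases Nat.eq_zero_or_pos ⌈y⌉₊ with h | h
      · simp [h, hy]
      · rw [Nat.cast_sub h, Nat.cast_one]; linarith [Nat.ceil_lt_add_one hy]

lemma tent_le_mul_card {σ : ℝ} (hσ : 0 < σ) {M : ℕ} (hM : 0 < M) (z : ℝ) :
    tent σ z ≤ σ / M * #((Icc 1 M).filter fun m : ℕ => nearestIntDist z ≤ m * σ / M) := by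
  set θ := nearestIntDist z
  rcases le_or_gt σ θ with h | h
  · rw [tent, max_eq_right (by linarith)]; positivity
  have hM' : (0 : ℝ) < M := by exact_mod_cast hM
  have hsplit := card_filter_add_card_filter_not (s := Icc 1 M) (fun m : ℕ => θ ≤ m * σ / M)
  rw [Nat.card_Icc, Nat.add_sub_cancel] at hsplit
  have hlt : (Icc 1 M).filter (fun m : ℕ => ¬ θ ≤ m * σ / M) =
      (Icc 1 M).filter (fun m : ℕ => (m : ℝ) < M * θ / σ) :=
    filter_congr fun m _ => by rw [not_le, lt_div_iff₀ hσ, div_lt_iff₀ hM']; ring_nf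
  have hbad := card_filter_Icc_lt_le M (y := M * θ / σ)
    (div_nonneg (mul_nonneg (Nat.cast_nonneg M) (nearestIntDist_nonneg z)) hσ.le)
  rw [← hlt] at hbad
  have hcast : (#((Icc 1 M).filter fun m : ℕ => θ ≤ m * σ / M) : ℝ) +
      #((Icc 1 M).filter fun m : ℕ => ¬ θ ≤ m * σ / M) = M := by
    exact_mod_cast hsplit
  rw [tent, max_eq_left (by linarith)]
  calc σ - θ = σ / M * (M - M * θ / σ) := by field_simp
    _ ≤ σ / M * #((Icc 1 M).filter fun m : ℕ => θ ≤ m * σ / M) := by gcongr; linarith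

lemma card_filter_range_add_mod_lt {Q L j : ℕ} (h2L : 2 * L ≤ Q) (hj : j < Q) :
    #((range L).filter fun ω => (ω + j) % Q < L) = L - min j (Q - j) := by
  have hset : (range L).filter (fun ω => (ω + j) % Q < L) = range (L - j) ∪ Ico (Q - j) L := by
    ext ω
    simp only [mem_filter, mem_range, mem_union, mem_Ico]
    by_cases hω : ω < L
    · rcases lt_or_ge (ω + j) Q with h | h
      · rw [Nat.mod_eq_of_lt h]; omega
      · rw [Nat.mod_eq_sub_mod h, Nat.mod_eq_of_lt (by omega)]; omega
    · omega
  have hdisj : Disjoint (range (L - j)) (Ico (Q - j) L) :=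
    disjoint_left.mpr fun ω h h' => by simp only [mem_range, mem_Ico] at h h'; omega
  rw [hset, card_union_of_disjoint hdisj, card_range, Nat.card_Ico]
  omega

/-- Two arcs `[a, a + L)` and `[b, b + L)` of `ZMod Q` overlap in `L - ‖a - b‖` points. -/
lemma card_filter_val_sub_lt {Q : ℕ} [NeZero Q] {L : ℕ} (h2L : 2 * L ≤ Q) (a b : ZMod Q) :
    #{v : ZMod Q | (v - a).val < L ∧ (v - b).val < L} = L - min (a - b).val (Q - (a - b).val) := by
  rw [← card_filter_range_add_mod_lt h2L (ZMod.val_lt (a - b))]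
  have hval {ω : ℕ} (hω : ω < L) : (ω : ZMod Q).val = ω := ZMod.val_cast_of_lt (by omega)
  refine card_nbij' (fun v => (v - a).val) (fun ω => (ω : ZMod Q) + a) ?_ ?_ ?_ ?_
  · intro v hv
    simp only [coe_filter, mem_univ, true_and, Set.mem_ofPred_eq, mem_range] at hv ⊢
    rwa [← ZMod.val_add, sub_add_sub_cancel]
  · intro ω hω
    simp only [coe_filter, mem_range, Set.mem_ofPred_eq, mem_univ, true_and] at hω ⊢
    refine ⟨by rw [add_sub_cancel_right, hval hω.1]; exact hω.1, ?_⟩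
    rw [add_sub_assoc, ZMod.val_add, hval hω.1]
    exact hω.2
  · intro v _
    simp
  · intro ω hω
    simp only [coe_filter, mem_range, Set.mem_ofPred_eq] at hω
    simp [hval hω.1]

lemma tent_intCast_div {Q : ℕ} [NeZero Q] {L : ℕ} (h2L : 2 * L ≤ Q) (a b : ℤ) :
    tent (L / Q) ((a - b : ℤ) / Q) =
      #{v : ZMod Q | (v - a).val < L ∧ (v - b).val < L} / Q := by
  rw [card_filter_val_sub_lt h2L, tent, nearestIntDist_intCast_div, Int.cast_sub]
  set m := min ((a : ZMod Q) - b).val (Q - ((a : ZMod Q) - b).val)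
  rw [div_sub_div_same]
  rcases le_or_gt m L with h | h
  · rw [Nat.cast_sub h, max_eq_left (div_nonneg (by simp [h]) (Nat.cast_nonneg Q))]
  · rw [Nat.sub_eq_zero_of_le h.le, max_eq_right (div_nonpos_of_nonpos_of_nonneg
      (by simp [h.le]) (Nat.cast_nonneg Q)), Nat.cast_zero, zero_div]

lemma sum_mul_sub_le_sum_sq {G : Type*} [AddGroup G] [Fintype G] (g : G → ℝ) (c : G) :
    ∑ v, g v * g (v - c) ≤ ∑ v, g v ^ 2 := by
  have hshift : ∑ v, g (v - c) ^ 2 = ∑ v, g v ^ 2 :=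
    (Equiv.subRight c).sum_comp fun v => g v ^ 2
  have h := sum_le_sum fun v (_ : v ∈ univ) => two_mul_le_add_sq (g v) (g (v - c))
  simp only [mul_assoc, ← mul_sum, sum_add_distrib, hshift] at h
  linarith

lemma sum_sum_card_filter_and {ι G : Type*} [Fintype G] (s : Finset ι) (P R : ι → G → Prop)
    [∀ i v, Decidable (P i v)] [∀ i v, Decidable (R i v)] :
    ∑ i ∈ s, ∑ j ∈ s, (#{v | P i v ∧ R j v} : ℝ) =
      ∑ v, (#{i ∈ s | P i v} : ℝ) * #{j ∈ s | R j v} := by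
  simp only [card_filter, Nat.cast_sum, Nat.cast_ite, Nat.cast_one, Nat.cast_zero, sum_mul_sum,
    ite_zero_mul_ite_zero, mul_one, ite_and]
  exact (sum_congr rfl fun i _ => sum_comm).trans sum_comm

/-- On `ℤ / Q` the tent is the autocorrelation of the indicator of an arc of `ZMod Q`, which
makes it positive definite. -/
lemma sum_tent_intCast_div_sub_le {Q : ℕ} [NeZero Q] {L : ℕ} (h2L : 2 * L ≤ Q) {ι : Type*}
    (s : Finset ι) (a : ι → ℤ) (c : ℤ) :
    ∑ p ∈ s ×ˢ s, tent (L / Q) ((a p.1 - a p.2 - c : ℤ) / Q) ≤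
      ∑ p ∈ s ×ˢ s, tent (L / Q) ((a p.1 - a p.2 : ℤ) / Q) := by
  set g : ZMod Q → ℝ := fun v => #{i ∈ s | (v - a i).val < L}
  have hcorr (c : ℤ) : ∑ p ∈ s ×ˢ s, tent (L / Q) ((a p.1 - (a p.2 + c) : ℤ) / Q) =
      (∑ v, g v * g (v - c)) / Q := by
    simp only [sum_product]
    simp only [tent_intCast_div h2L, ← sum_div, sum_sum_card_filter_and]
    simp only [g, Int.cast_add, sub_add_eq_sub_sub_swap]
  calc ∑ p ∈ s ×ˢ s, tent (L / Q) ((a p.1 - a p.2 - c : ℤ) / Q)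
      = (∑ v, g v * g (v - c)) / Q := by simp only [← hcorr, sub_sub]
    _ ≤ (∑ v, g v ^ 2) / Q :=
      div_le_div_of_nonneg_right (sum_mul_sub_le_sum_sq g _) (Nat.cast_nonneg Q)
    _ = ∑ p ∈ s ×ˢ s, tent (L / Q) ((a p.1 - a p.2 : ℤ) / Q) := by
      simpa [sq] using (hcorr 0).symm

lemma sum_tent_le_sum_tent_add {ι : Type*} (s : Finset ι) {x y : ι → ℝ} {t u σ τ δ : ℝ}
    (hxy : ∀ i, |x i - y i| ≤ δ) (htu : |t - u| ≤ δ) :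
    ∑ p ∈ s ×ˢ s, tent σ (x p.1 - x p.2 - t) ≤
      ∑ p ∈ s ×ˢ s, tent τ (y p.1 - y p.2 - u) + #s ^ 2 * (|σ - τ| + 3 * δ) := by
  have hterm (p : ι × ι) :
      tent σ (x p.1 - x p.2 - t) ≤ tent τ (y p.1 - y p.2 - u) + (|σ - τ| + 3 * δ) := by
    have hdiff : |(x p.1 - x p.2 - t) - (y p.1 - y p.2 - u)| ≤ 3 * δ :=
      calc _ = |(x p.1 - y p.1) - (x p.2 - y p.2) - (t - u)| := by ring_nf
        _ ≤ |x p.1 - y p.1| + |x p.2 - y p.2| + |t - u| :=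
          (abs_sub _ _).trans (add_le_add_left (abs_sub _ _) _)
        _ ≤ 3 * δ := by linarith [hxy p.1, hxy p.2]
    linarith [le_abs_self (tent σ (x p.1 - x p.2 - t) - tent τ (y p.1 - y p.2 - u)),
      abs_tent_sub_tent_le σ τ (x p.1 - x p.2 - t) (y p.1 - y p.2 - u)]
  calc _ ≤ ∑ p ∈ s ×ˢ s, (tent τ (y p.1 - y p.2 - u) + (|σ - τ| + 3 * δ)) :=
        sum_le_sum fun p _ => hterm p
    _ = _ := by rw [sum_add_distrib, sum_const, card_product, nsmul_eq_mul]; push_cast; ring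

lemma abs_sub_round_mul_div_le {Q : ℝ} (hQ : 0 < Q) (y : ℝ) :
    |y - round (Q * y) / Q| ≤ 1 / (2 * Q) := by
  have h : y - round (Q * y) / Q = (Q * y - round (Q * y)) / Q := by field_simp
  rw [h, abs_div, abs_of_pos hQ, div_le_div_iff₀ hQ (by positivity)]
  nlinarith [abs_sub_round (Q * y)]

lemma abs_sub_ceil_mul_div_le {Q : ℝ} (hQ : 0 < Q) {y : ℝ} (hy : 0 ≤ y) :
    |y - ⌈Q * y⌉₊ / Q| ≤ 1 / Q := by
  have h₁ : y ≤ ⌈Q * y⌉₊ / Q := by rw [le_div_iff₀ hQ]; linarith [Nat.le_ceil (Q * y)]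
  have h₂ : (⌈Q * y⌉₊ : ℝ) / Q ≤ y + 1 / Q := by
    rw [div_le_iff₀ hQ, add_mul, one_div_mul_cancel hQ.ne']
    linarith [Nat.ceil_lt_add_one (by positivity : 0 ≤ Q * y)]
  rw [abs_le]
  constructor <;> linarith

lemma sum_tent_sub_le_add {ι : Type*} (s : Finset ι) (x : ι → ℝ) (t : ℝ) {σ : ℝ} (hσ : 0 ≤ σ)
    {Q : ℕ} (hQ : 0 < Q) (h2L : 2 * ⌈Q * σ⌉₊ ≤ Q) :
    ∑ p ∈ s ×ˢ s, tent σ (x p.1 - x p.2 - t) ≤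
      ∑ p ∈ s ×ˢ s, tent σ (x p.1 - x p.2) + #s ^ 2 * (5 / Q) := by
  have : NeZero Q := ⟨hQ.ne'⟩
  have hQ' : (0 : ℝ) < Q := by exact_mod_cast hQ
  set L := ⌈Q * σ⌉₊
  set a : ι → ℤ := fun i => round (Q * x i)
  have hσL : |σ - L / Q| ≤ 1 / Q := abs_sub_ceil_mul_div_le hQ' hσ
  have hx (i : ι) : |x i - a i / Q| ≤ 1 / (2 * Q) := abs_sub_round_mul_div_le hQ' (x i)
  have hdisc (c : ℤ) : ∑ p ∈ s ×ˢ s, tent (L / Q) ((a p.1 : ℝ) / Q - a p.2 / Q - c / Q) =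
      ∑ p ∈ s ×ˢ s, tent (L / Q) ((a p.1 - a p.2 - c : ℤ) / Q) :=
    sum_congr rfl fun p _ => by push_cast; ring_nf
  calc ∑ p ∈ s ×ˢ s, tent σ (x p.1 - x p.2 - t)
      ≤ ∑ p ∈ s ×ˢ s, tent (L / Q) ((a p.1 : ℝ) / Q - a p.2 / Q - (round (Q * t) : ℤ) / Q)
        + #s ^ 2 * (|σ - L / Q| + 3 * (1 / (2 * Q))) :=
        sum_tent_le_sum_tent_add s (y := fun i => (a i : ℝ) / Q) hx (abs_sub_round_mul_div_le hQ' t)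
    _ ≤ ∑ p ∈ s ×ˢ s, tent (L / Q) ((a p.1 : ℝ) / Q - a p.2 / Q - (0 : ℤ) / Q)
        + #s ^ 2 * (1 / Q + 3 * (1 / (2 * Q))) := by
        rw [hdisc, hdisc]
        refine add_le_add ?_ (by gcongr)
        simpa using sum_tent_intCast_div_sub_le h2L s a (round (Q * t))
    _ ≤ ∑ p ∈ s ×ˢ s, tent σ (x p.1 - x p.2 - 0) + #s ^ 2 * (|L / Q - σ| + 3 * (1 / (2 * Q)))
        + #s ^ 2 * (1 / Q + 3 * (1 / (2 * Q))) := by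
        gcongr
        exact sum_tent_le_sum_tent_add s (x := fun i => (a i : ℝ) / Q) (y := x)
          (fun i => by rw [abs_sub_comm]; exact hx i) (by simp)
    _ ≤ ∑ p ∈ s ×ˢ s, tent σ (x p.1 - x p.2) + #s ^ 2 * (5 / Q) := by
        have herr : |L / Q - σ| + 3 * (1 / (2 * Q)) + (1 / Q + 3 * (1 / (2 * Q))) ≤ 5 / Q := by
          rw [abs_sub_comm]
          have h₃ : 3 * (1 / (2 * (Q : ℝ))) = 3 / 2 * (1 / Q) := by ring
          have h₅ : 5 / (Q : ℝ) = 5 * (1 / Q) := by ring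
          linarith
        simp only [sub_zero]
        linarith [mul_le_mul_of_nonneg_left herr (by positivity : (0 : ℝ) ≤ #s ^ 2)]

lemma sum_tent_sub_le {ι : Type*} (s : Finset ι) (x : ι → ℝ) (t : ℝ) {σ : ℝ} (hσ : 0 ≤ σ)
    (hσ' : σ < 1 / 2) :
    ∑ p ∈ s ×ˢ s, tent σ (x p.1 - x p.2 - t) ≤ ∑ p ∈ s ×ˢ s, tent σ (x p.1 - x p.2) := by
  have hQ : ∀ᶠ Q : ℕ in atTop, 0 < Q ∧ 2 * ⌈Q * σ⌉₊ ≤ Q := by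
    filter_upwards [eventually_gt_atTop 0,
      tendsto_natCast_atTop_atTop.eventually_ge_atTop (2 / (1 - 2 * σ))] with Q hQ hQσ
    rw [div_le_iff₀ (by linarith)] at hQσ
    have hL := Nat.ceil_lt_add_one (by positivity : 0 ≤ (Q : ℝ) * σ)
    exact ⟨hQ, by exact_mod_cast (by linarith : (2 * ⌈Q * σ⌉₊ : ℝ) ≤ Q)⟩
  refine ge_of_tendsto ?_ (hQ.mono fun Q hQ => sum_tent_sub_le_add s x t hσ hQ.1 hQ.2)
  simpa using tendsto_const_nhds.add ((tendsto_const_div_atTop_nhds_zero_nat 5).const_mul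
    ((#s : ℝ) ^ 2))

noncomputable def pairCount (x : ℕ → ℝ) (N : ℕ) (δ : ℝ) : ℕ :=
  #((range N ×ˢ range N).filter fun p => p.1 ≠ p.2 ∧ nearestIntDist (x p.1 - x p.2) ≤ δ)

lemma pairCorr_eq_pairCount (x : ℕ → ℝ) (β : ℝ) (N : ℕ) (s : ℝ) :
    pairCorr x β N s = N ^ (β - 2) * pairCount x N (s / N ^ β) := rfl

/-- Ball covering: each pair at distance `≤ Kσ` is seen by the tents of `2K + 2` translates, and
translating does not increase the tent sum. -/
lemma mul_pairCount_le_sum_tent (x : ℕ → ℝ) (N K : ℕ) {σ : ℝ} (hσ : 0 < σ) (hσ' : σ < 1 / 2) :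
    σ * pairCount x N (K * σ) ≤
      (2 * K + 2) * ∑ p ∈ range N ×ˢ range N, tent σ (x p.1 - x p.2) := by
  set P := range N ×ˢ range N
  set R := Icc (-(K : ℤ)) (K + 1)
  have hR : (#R : ℝ) = 2 * K + 2 := by
    rw [Int.card_Icc, show ((K : ℤ) + 1 + 1 - -K).toNat = 2 * K + 2 by omega]
    push_cast; ring
  calc σ * pairCount x N (K * σ)
      = ∑ _p ∈ P.filter (fun p => p.1 ≠ p.2 ∧ nearestIntDist (x p.1 - x p.2) ≤ K * σ), σ := by
        rw [sum_const, nsmul_eq_mul, mul_comm, pairCount]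
    _ ≤ ∑ p ∈ P.filter (fun p => p.1 ≠ p.2 ∧ nearestIntDist (x p.1 - x p.2) ≤ K * σ),
          ∑ r ∈ R, tent σ (x p.1 - x p.2 - r * σ) :=
        sum_le_sum fun p hp => le_sum_tent_sub_mul hσ (mem_filter.mp hp).2.2
    _ ≤ ∑ p ∈ P, ∑ r ∈ R, tent σ (x p.1 - x p.2 - r * σ) :=
        sum_le_sum_of_subset_of_nonneg (filter_subset _ _)
          fun _ _ _ => sum_nonneg fun _ _ => tent_nonneg _ _
    _ = ∑ r ∈ R, ∑ p ∈ P, tent σ (x p.1 - x p.2 - r * σ) := sum_comm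
    _ ≤ ∑ _r ∈ R, ∑ p ∈ P, tent σ (x p.1 - x p.2) :=
        sum_le_sum fun r _ => sum_tent_sub_le _ x _ hσ.le hσ'
    _ = (2 * K + 2) * ∑ p ∈ P, tent σ (x p.1 - x p.2) := by rw [sum_const, nsmul_eq_mul, hR]

lemma sum_tent_le_pairCount (x : ℕ → ℝ) (N : ℕ) {σ : ℝ} (hσ : 0 < σ) {M : ℕ} (hM : 0 < M) :
    ∑ p ∈ range N ×ˢ range N, tent σ (x p.1 - x p.2) ≤
      σ / M * ∑ m ∈ Icc 1 M, (pairCount x N (m * σ / M) : ℝ) + N * σ := by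
  set P := range N ×ˢ range N
  rw [← sum_filter_add_sum_filter_not P (fun p => p.1 ≠ p.2)]
  have hdiag : P.filter (fun p => ¬ p.1 ≠ p.2) = (range N).diag := by
    simp only [not_not, P, diag_eq_filter]
  refine add_le_add ?_ ?_
  · calc ∑ p ∈ P.filter (fun p => p.1 ≠ p.2), tent σ (x p.1 - x p.2)
        ≤ ∑ p ∈ P.filter (fun p => p.1 ≠ p.2), σ / M *
            #((Icc 1 M).filter fun m : ℕ => nearestIntDist (x p.1 - x p.2) ≤ m * σ / M) :=
          sum_le_sum fun p _ => tent_le_mul_card hσ hM _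
      _ = σ / M * ∑ m ∈ Icc 1 M, (pairCount x N (m * σ / M) : ℝ) := by
          rw [← mul_sum]
          congr 1
          simp only [pairCount, ← filter_filter, card_filter]
          push_cast
          exact sum_comm
  · calc ∑ p ∈ P.filter (fun p => ¬ p.1 ≠ p.2), tent σ (x p.1 - x p.2)
        ≤ ∑ _p ∈ P.filter (fun p => ¬ p.1 ≠ p.2), σ := sum_le_sum fun _ _ => tent_le hσ.le _
      _ = N * σ := by rw [sum_const, nsmul_eq_mul, hdiag, diag_card, card_range]

lemma pairCount_le_sum_pairCount (x : ℕ → ℝ) (N K : ℕ) {σ : ℝ} (hσ : 0 < σ) (hσ' : σ < 1 / 2)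
    {M : ℕ} (hM : 0 < M) :
    (pairCount x N (K * σ) : ℝ) ≤
      (2 * K + 2) * (1 / M * ∑ m ∈ Icc 1 M, (pairCount x N (m * σ / M) : ℝ) + N) := by
  refine le_of_mul_le_mul_left ?_ hσ
  calc σ * pairCount x N (K * σ)
      ≤ (2 * K + 2) * (σ / M * ∑ m ∈ Icc 1 M, (pairCount x N (m * σ / M) : ℝ) + N * σ) :=
        (mul_pairCount_le_sum_tent x N K hσ hσ').trans
          (mul_le_mul_of_nonneg_left (sum_tent_le_pairCount x N hσ hM) (by positivity))
    _ = σ * ((2 * K + 2) * (1 / M * ∑ m ∈ Icc 1 M, (pairCount x N (m * σ / M) : ℝ) + N)) := by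
        ring

lemma pairCorr_le_sum_pairCorr (x : ℕ → ℝ) {β : ℝ} (hβ : 0 ≤ β) {N : ℕ} (hN : 0 < N) {s : ℝ}
    (hs : 0 < s) {K : ℕ} (hK : 2 * s < K) :
    pairCorr x β N s ≤
      (2 * K + 2) * (1 / K * ∑ m ∈ Icc 1 K, pairCorr x β N (m * s / K ^ 2) + N ^ (β - 1)) := by
  have hN' : (0 : ℝ) < N := by exact_mod_cast hN
  have hNβ : 1 ≤ (N : ℝ) ^ β := Real.one_le_rpow (by exact_mod_cast hN) hβ
  have hK' : (0 : ℝ) < K := by linarith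
  set σ := s / (K * N ^ β) with hσ_def
  have hσ : 0 < σ := by positivity
  have hσ' : σ < 1 / 2 :=
    calc σ ≤ s / K := div_le_div_of_nonneg_left hs.le hK' (le_mul_of_one_le_right hK'.le hNβ)
      _ < 1 / 2 := by rw [div_lt_iff₀ hK']; linarith
  have hcount := pairCount_le_sum_pairCount x N K hσ hσ' (by exact_mod_cast hK')
  have hKσ : (K : ℝ) * σ = s / N ^ β := by rw [hσ_def]; field_simp
  have hmσ (m : ℕ) : m * σ / K = m * s / K ^ 2 / N ^ β := by
    rw [hσ_def]; field_simp
  simp only [hKσ, hmσ] at hcount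
  have hpow : (N : ℝ) ^ (β - 2) * N = N ^ (β - 1) := by
    rw [← Real.rpow_add_one hN'.ne']; ring_nf
  simp only [pairCorr_eq_pairCount, ← mul_sum, ← hpow]
  calc (N : ℝ) ^ (β - 2) * pairCount x N (s / N ^ β)
      ≤ N ^ (β - 2) * ((2 * K + 2) *
          (1 / K * ∑ m ∈ Icc 1 K, (pairCount x N (m * s / K ^ 2 / N ^ β) : ℝ) + N)) := by
        gcongr
    _ = _ := by ring

lemma pairCorr_nonneg (x : ℕ → ℝ) (β : ℝ) (N : ℕ) (s : ℝ) : 0 ≤ pairCorr x β N s := by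
  unfold pairCorr
  positivity

lemma sum_Icc_natCast (K : ℕ) : ∑ m ∈ Icc 1 K, (m : ℝ) = K * (K + 1) / 2 := by
  induction K with
  | zero => simp
  | succ K ih => rw [sum_Icc_succ_top (by omega), ih]; push_cast; ring

lemma limsup_pairCorr_le_sum (x : ℕ → ℝ) {β : ℝ} (hβ0 : 0 ≤ β) (hβ1 : β < 1) {s : ℝ} (hs : 0 < s)
    {K : ℕ} (hK : 2 * s < K) {f : ℝ → ℝ}
    (hconv : ∀ m ∈ Icc 1 K,
      Tendsto (fun N => pairCorr x β N (m * s / K ^ 2)) atTop (𝓝 (f (m * s / K ^ 2)))) :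
    limsup (fun N => pairCorr x β N s) atTop ≤
      (2 * K + 2) * (1 / K * ∑ m ∈ Icc 1 K, f (m * s / K ^ 2)) := by
  have hpow : Tendsto (fun N : ℕ => (N : ℝ) ^ (β - 1)) atTop (𝓝 0) := by
    have := (tendsto_rpow_neg_atTop (by linarith : 0 < 1 - β)).comp tendsto_natCast_atTop_atTop
    simpa only [Function.comp_def, neg_sub] using this
  have hmaj := (((tendsto_finsetSum _ hconv).const_mul (1 / (K : ℝ))).add hpow).const_mul
    (2 * (K : ℝ) + 2)
  rw [add_zero] at hmaj
  rw [← hmaj.limsup_eq]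
  exact limsup_le_limsup
    (eventually_atTop.mpr ⟨1, fun N hN => pairCorr_le_sum_pairCorr x hβ0 hN hs hK⟩)
    (isCoboundedUnder_le_of_le atTop (pairCorr_nonneg x β · s)) hmaj.isBoundedUnder_le

lemma limsup_pairCorr_le_mul (x : ℕ → ℝ) {β : ℝ} (hβ0 : 0 ≤ β) (hβ1 : β < 1) {f : ℝ → ℝ} {c : ℝ}
    (h : ∀ᶠ u in 𝓝[≥] 0, Tendsto (fun N => pairCorr x β N u) atTop (𝓝 (f u)) ∧ f u ≤ c * u)
    {s : ℝ} (hs : 0 < s) :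
    limsup (fun N => pairCorr x β N s) atTop ≤ c * s := by
  obtain ⟨ρ, hρ, hρh⟩ := mem_nhdsGE_iff_exists_Ico_subset.mp h
  have hK : ∀ᶠ K : ℕ in atTop,
      limsup (fun N => pairCorr x β N s) atTop ≤ c * s * (1 + 1 / K) ^ 2 := by
    filter_upwards [tendsto_natCast_atTop_atTop.eventually_gt_atTop (max (2 * s) (s / ρ))]
      with K hK
    rw [max_lt_iff, div_lt_iff₀ hρ] at hK
    have hK' : (0 : ℝ) < K := by linarith
    have hsample (m : ℕ) (hm : m ∈ Icc 1 K) : (m * s / K ^ 2 : ℝ) ∈ Set.Ico 0 ρ := by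
      have hmK : (m : ℝ) ≤ K := by exact_mod_cast (mem_Icc.mp hm).2
      refine ⟨by positivity, ?_⟩
      rw [div_lt_iff₀ (by positivity)]
      nlinarith
    calc limsup (fun N => pairCorr x β N s) atTop
        ≤ (2 * K + 2) * (1 / K * ∑ m ∈ Icc 1 K, f (m * s / K ^ 2)) :=
          limsup_pairCorr_le_sum x hβ0 hβ1 hs hK.1 fun m hm => (hρh (hsample m hm)).1
      _ ≤ (2 * K + 2) * (1 / K * ∑ m ∈ Icc 1 K, c * (m * s / K ^ 2)) := by
          gcongr with m hm
          exact (hρh (hsample m hm)).2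
      _ = c * s * (1 + 1 / K) ^ 2 := by
          rw [← mul_sum, ← sum_div, ← sum_mul, sum_Icc_natCast]
          field_simp
  refine ge_of_tendsto ?_ hK
  simpa using ((tendsto_const_div_atTop_nhds_zero_nat 1).const_add 1).pow 2 |>.const_mul (c * s)

lemma eventually_le_mul_of_hasDerivWithinAt {f : ℝ → ℝ} {d : ℝ}
    (hderiv : HasDerivWithinAt f d (Set.Ici 0) 0) (hf0 : f 0 = 0) {γ : ℝ} (hγ : 0 < γ) :
    ∀ᶠ u in 𝓝[≥] 0, f u ≤ (d + γ) * u := by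
  filter_upwards [(hasDerivWithinAt_iff_isLittleO.mp hderiv).bound hγ, self_mem_nhdsWithin]
    with u hu (hu0 : 0 ≤ u)
  simp only [hf0, sub_zero, smul_eq_mul, Real.norm_eq_abs, abs_of_nonneg hu0] at hu
  linarith [le_abs_self (f u - u * d)]

theorem stmt9_general (x : ℕ → ℝ) (β s₀ d : ℝ) (f : ℝ → ℝ)
    (hβ0 : 0 ≤ β) (hβ1 : β < 1) (hs₀ : 0 < s₀)
    (hconv : ∀ s, 0 ≤ s → s < s₀ →
      Tendsto (fun N => pairCorr x β N s) atTop (nhds (f s)))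
    (hf0 : f 0 = 0)
    (hderiv : HasDerivWithinAt f d (Set.Ici 0) 0) :
    ∀ s, 0 ≤ s → atTop.limsup (fun N => pairCorr x β N s) ≤ d * s := by
  intro s hs
  rcases hs.eq_or_lt with rfl | hs
  · rw [(hconv 0 le_rfl hs₀).limsup_eq, hf0, mul_zero]
  have hconv' : ∀ᶠ u in 𝓝[≥] 0, Tendsto (fun N => pairCorr x β N u) atTop (𝓝 (f u)) :=
    mem_of_superset (Ico_mem_nhdsGE hs₀) fun u hu => hconv u hu.1 hu.2
  refine le_of_forall_pos_le_add fun ε hε => ?_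
  calc atTop.limsup (fun N => pairCorr x β N s)
      ≤ (d + ε / s) * s := limsup_pairCorr_le_mul x hβ0 hβ1
        (hconv'.and (eventually_le_mul_of_hasDerivWithinAt hderiv hf0 (div_pos hε hs))) hs
    _ = d * s + ε := by field_simp

theorem stmt9 (x : ℕ → ℝ) (β s₀ d : ℝ) (f : ℝ → ℝ)
    (hx : ∀ n, x n ∈ Set.Icc (0:ℝ) 1)
    (hβ0 : 0 ≤ β) (hβ1 : β < 1) (hs₀ : 0 < s₀)
    (hconv : ∀ s, 0 ≤ s → s < s₀ →
      Tendsto (fun N => pairCorr x β N s) atTop (nhds (f s)))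
    (hf0 : f 0 = 0)
    (hdiff : DifferentiableOn ℝ f (Set.Ico 0 s₀))
    (hderiv : HasDerivWithinAt f d (Set.Ici 0) 0) :
    ∀ s, 0 ≤ s → atTop.limsup (fun N => pairCorr x β N s) ≤ d * s :=
  stmt9_general x β s₀ d f hβ0 hβ1 hs₀ hconv hf0 hderiv
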